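/- Let d ≤ k and let X, X̃ ∈ ℝ^{d×k} both have full rank d, with Gram matrices G = XᵀX and G̃ = X̃ᵀX̃. If ‖G − G̃‖_F ≤ σ_d(X)²/2, then ρ(X, X̃) ≤ √2 · ‖G − G̃‖_F / σ_d(X). -/

import Mathlib

open Matrix

/-- Euclidean norm of a vector. -/
noncomputable def euclNorm {n : ℕ} (v : Fin n → ℝ) : ℝ :=
  Real.sqrt (∑ i, (v i) ^ 2)

/-- Frobenius norm of a matrix. -/
noncomputable def frobNorm {m n : ℕ} (A : Matrix (Fin m) (Fin n) ℝ) : ℝ :=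
  Real.sqrt (∑ i, ∑ j, (A i j) ^ 2)

/-- The smallest (d-th) singular value of `X ∈ ℝ^{d×k}` (for `d ≤ k`),
characterized variationally as `min_{‖u‖=1} ‖Xᵀ u‖`. -/
noncomputable def sigmaMin {d k : ℕ} (X : Matrix (Fin d) (Fin k) ℝ) : ℝ :=
  sInf {r | ∃ u : Fin d → ℝ, euclNorm u = 1 ∧ r = euclNorm (Matrix.vecMul u X)}

/-- The Procrustes distance: `min` over orthogonal `Q` of `‖X − Q X̃‖_F`. -/
noncomputable def rho {d k : ℕ} (X Y : Matrix (Fin d) (Fin k) ℝ) : ℝ :=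
  sInf {r | ∃ Q : Matrix (Fin d) (Fin d) ℝ, Qᵀ * Q = 1 ∧ r = frobNorm (X - Q * Y)}

/-!
Write `Y` for `X̃`, `σ` for `sigmaMin X` and `F` for `‖XᵀX − YᵀY‖_F`. Take the polar decomposition
`Y Xᵀ = R S` with `R` orthogonal and `S` symmetric positive definite, and put `U = Xᵀ`, `V = Yᵀ R`.
Then `VᵀU = UᵀV = S` and `V Vᵀ = YᵀY`, and for such a pair one has the identity
`‖UUᵀ − VVᵀ‖² = ‖UᵀU − S‖² + ‖VᵀV − S‖² + 2 tr(S (U − V)ᵀ(U − V))`,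
so `2 λ_min(S) ‖U − V‖² ≤ F²`. Since `‖Y Xᵀ z‖² ≥ σ² (σ² − F) ‖z‖² ≥ σ⁴/2 ‖z‖²`, we get
`2 λ_min(S) ≥ σ²`, and `Q = Rᵀ` witnesses `ρ(X, X̃) ≤ ‖X − Q X̃‖_F = ‖U − V‖_F ≤ F / σ`.
-/

theorem Matrix.dotProduct_self_nonneg {n : Type*} [Fintype n] (v : n → ℝ) : 0 ≤ v ⬝ᵥ v := by
  simpa using dotProduct_self_star_nonneg v

theorem Matrix.sq_dotProduct_le {n : Type*} [Fintype n] (v w : n → ℝ) :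
    (v ⬝ᵥ w) ^ 2 ≤ (v ⬝ᵥ v) * (w ⬝ᵥ w) := by
  simpa [dotProduct, sq] using Finset.sum_mul_sq_le_sq_mul_sq Finset.univ v w

theorem Matrix.dotProduct_transpose_mul_self_mulVec {m n : Type*} [Fintype m] [Fintype n]
    (A : Matrix m n ℝ) (z : n → ℝ) : z ⬝ᵥ (Aᵀ * A) *ᵥ z = (A *ᵥ z) ⬝ᵥ (A *ᵥ z) := by
  rw [← mulVec_mulVec, dotProduct_mulVec, vecMul_transpose]

theorem Matrix.mul_dotProduct_le_of_forall_le {m n : Type*} [Fintype m] [Fintype n]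
    (A : Matrix m n ℝ) {s : ℝ} (hA : ∀ z, s * (z ⬝ᵥ z) ≤ (A *ᵥ z) ⬝ᵥ (A *ᵥ z)) (z : n → ℝ) :
    s * ((A *ᵥ z) ⬝ᵥ (A *ᵥ z)) ≤ (Aᵀ *ᵥ A *ᵥ z) ⬝ᵥ (Aᵀ *ᵥ A *ᵥ z) := by
  have hCS := sq_dotProduct_le z (Aᵀ *ᵥ A *ᵥ z)
  rw [dotProduct_mulVec, vecMul_transpose] at hCS
  have hsq := hA z
  have hB := dotProduct_self_nonneg (Aᵀ *ᵥ A *ᵥ z)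
  rcases le_or_gt s 0 with hs | hs
  · nlinarith [dotProduct_self_nonneg (A *ᵥ z)]
  rcases (dotProduct_self_nonneg (A *ᵥ z)).eq_or_lt with ha | ha
  · rwa [← ha, mul_zero]
  · nlinarith [mul_le_mul_of_nonneg_left hCS hs.le, mul_le_mul_of_nonneg_right hsq hB]

theorem Matrix.mulVec_injective_of_rank_eq_card {m n K : Type*} [Fintype m] [Fintype n]
    [Field K] (A : Matrix m n K) (hA : A.rank = Fintype.card n) : Function.Injective A.mulVec := by
  have := LinearMap.finrank_range_add_finrank_ker A.mulVecLin
  rw [← Matrix.rank, hA, Module.finrank_fintype_fun_eq_card, add_eq_left,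
    Submodule.finrank_eq_zero, LinearMap.ker_eq_bot] at this
  exact this

open scoped MatrixOrder in
theorem Matrix.exists_polar_decomposition {n : Type*} [Fintype n] [DecidableEq n]
    (M : Matrix n n ℝ) {b : ℝ} (hb : 0 < b)
    (hM : ∀ z, b * (z ⬝ᵥ z) ≤ (M *ᵥ z) ⬝ᵥ (M *ᵥ z)) :
    ∃ R : Matrix n n ℝ, Rᵀ * R = 1 ∧ (Rᵀ * M).IsSymm ∧ (Rᵀ * M - √b • 1).PosSemidef := by
  have hN : (Mᵀ * M).IsHermitian := by simpa using isHermitian_conjTranspose_mul_self M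
  have hspec : ∀ x ∈ spectrum ℝ (Mᵀ * M), b ≤ x := by
    rw [hN.spectrum_real_eq_range_eigenvalues]
    rintro _ ⟨i, rfl⟩
    set v := hN.eigenvectorBasis i
    have hv : v.ofLp ⬝ᵥ v.ofLp = 1 := by
      have h : inner ℝ v v = 1 := by
        rw [real_inner_self_eq_norm_sq, hN.eigenvectorBasis.orthonormal.1 i, one_pow]
      rwa [EuclideanSpace.inner_eq_star_dotProduct, star_trivial] at h
    simpa [hN.eigenvalues_eq i, dotProduct_transpose_mul_self_mulVec, hv] using hM v.ofLp
  set S := cfc Real.sqrt (Mᵀ * M)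
  have hSS : S * S = Mᵀ * M := by
    rw [← cfc_mul ..]
    conv_rhs => rw [← cfc_id' ℝ (Mᵀ * M)]
    exact cfc_congr fun x hx => Real.mul_self_sqrt (hb.le.trans (hspec x hx))
  have hSb : (S - √b • 1).PosSemidef := by
    have : S - √b • 1 = cfc (fun x => √x - √b) (Mᵀ * M) := by
      rw [cfc_sub .., cfc_const .., Algebra.algebraMap_eq_smul_one]
    rw [this]
    exact (cfc_nonneg fun x hx => sub_nonneg.2 (Real.sqrt_le_sqrt (hspec x hx))).posSemidef
  have hSsymm : Sᵀ = S := cfc_predicate Real.sqrt (Mᵀ * M)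
  have hS : IsUnit S.det := by
    rw [← isUnit_iff_isUnit_det]
    simpa using (PosDef.posSemidef_add hSb ((PosDef.one).smul (Real.sqrt_pos.2 hb))).isUnit
  have hRM : (M * S⁻¹)ᵀ * M = S := by
    rw [transpose_mul, transpose_nonsing_inv, hSsymm, Matrix.mul_assoc, ← hSS, ← Matrix.mul_assoc,
      nonsing_inv_mul S hS, Matrix.one_mul]
  refine ⟨M * S⁻¹, ?_, by rwa [hRM], by rwa [hRM]⟩
  rw [← Matrix.mul_assoc, hRM, mul_nonsing_inv S hS]

theorem Matrix.trace_mul_self_sub_mul_transpose {m n : Type*} [Fintype m] [Fintype n]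
    (U V : Matrix m n ℝ) (h : (Vᵀ * U)ᵀ = Vᵀ * U) :
    trace ((U * Uᵀ - V * Vᵀ) * (U * Uᵀ - V * Vᵀ)) =
      trace ((Uᵀ * U - Vᵀ * U) * (Uᵀ * U - Vᵀ * U)) +
      trace ((Vᵀ * V - Vᵀ * U) * (Vᵀ * V - Vᵀ * U)) +
      2 * trace (Vᵀ * U * ((U - V)ᵀ * (U - V))) := by
  rw [transpose_mul, transpose_transpose] at h
  have cyc : ∀ A B : Matrix m n ℝ, trace (A * Aᵀ * (B * Bᵀ)) = trace (Bᵀ * A * (Aᵀ * B)) := by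
    intro A B
    rw [← trace_mul_cycle, Matrix.mul_assoc, Matrix.mul_assoc, ← Matrix.mul_assoc Aᵀ,
      trace_mul_comm]
  simp only [Matrix.sub_mul, Matrix.mul_sub, transpose_sub, trace_sub, cyc, h]
  linear_combination trace_mul_comm (Uᵀ * U) (Vᵀ * U) + trace_mul_comm (Vᵀ * V) (Vᵀ * U)

theorem euclNorm_eq_norm {n : ℕ} (v : Fin n → ℝ) :
    euclNorm v = ‖(WithLp.toLp 2 v : EuclideanSpace ℝ (Fin n))‖ := by
  simp [euclNorm, EuclideanSpace.norm_eq]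

theorem euclNorm_sq {n : ℕ} (v : Fin n → ℝ) : euclNorm v ^ 2 = v ⬝ᵥ v := by
  rw [euclNorm, Real.sq_sqrt (by positivity)]
  simp [dotProduct, sq]

theorem frobNorm_nonneg {m n : ℕ} (A : Matrix (Fin m) (Fin n) ℝ) : 0 ≤ frobNorm A :=
  Real.sqrt_nonneg _

theorem frobNorm_sq {m n : ℕ} (A : Matrix (Fin m) (Fin n) ℝ) :
    frobNorm A ^ 2 = trace (Aᵀ * A) := by
  rw [frobNorm, Real.sq_sqrt (by positivity), trace, Finset.sum_comm]
  simp [mul_apply, sq]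

theorem frobNorm_transpose {m n : ℕ} (A : Matrix (Fin m) (Fin n) ℝ) :
    frobNorm Aᵀ = frobNorm A := by
  rw [frobNorm, frobNorm, Finset.sum_comm]
  rfl

theorem dotProduct_mulVec_le_frobNorm_mul {n : ℕ} (A : Matrix (Fin n) (Fin n) ℝ)
    (v : Fin n → ℝ) : v ⬝ᵥ A *ᵥ v ≤ frobNorm A * (v ⬝ᵥ v) := by
  have hCS := Finset.sum_mul_sq_le_sq_mul_sq Finset.univ
    (fun p : Fin n × Fin n => A p.1 p.2) (fun p => v p.1 * v p.2)
  have hA : ∑ p : Fin n × Fin n, A p.1 p.2 ^ 2 = frobNorm A ^ 2 := by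
    rw [frobNorm, Real.sq_sqrt (by positivity), Fintype.sum_prod_type]
  have hv : ∑ p : Fin n × Fin n, (v p.1 * v p.2) ^ 2 = (v ⬝ᵥ v) ^ 2 := by
    rw [sq, dotProduct, Finset.sum_mul_sum, Fintype.sum_prod_type]
    exact Finset.sum_congr rfl fun i _ => Finset.sum_congr rfl fun j _ => by ring
  have hvAv : ∑ p : Fin n × Fin n, A p.1 p.2 * (v p.1 * v p.2) = v ⬝ᵥ A *ᵥ v := by
    simp only [Fintype.sum_prod_type, dotProduct, mulVec, Finset.mul_sum]
    exact Finset.sum_congr rfl fun i _ => Finset.sum_congr rfl fun j _ => by ring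
  rw [hA, hv, hvAv, ← mul_pow] at hCS
  exact (abs_le_of_sq_le_sq' hCS (mul_nonneg (frobNorm_nonneg A) (dotProduct_self_nonneg v))).2

theorem sigmaMin_nonneg {d k : ℕ} (X : Matrix (Fin d) (Fin k) ℝ) : 0 ≤ sigmaMin X :=
  Real.sInf_nonneg (by rintro _ ⟨u, -, rfl⟩; exact Real.sqrt_nonneg _)

theorem sigmaMin_mul_euclNorm_le {d k : ℕ} (X : Matrix (Fin d) (Fin k) ℝ) (z : Fin d → ℝ) :
    sigmaMin X * euclNorm z ≤ euclNorm (z ᵥ* X) := by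
  rcases eq_or_ne z 0 with rfl | hz0
  · simp [euclNorm]
  have hz : 0 < euclNorm z := by
    rw [euclNorm_eq_norm]
    exact norm_pos_iff.2 ((WithLp.toLp_injective 2).ne hz0)
  have hu : euclNorm ((euclNorm z)⁻¹ • z) = 1 := by
    rw [euclNorm_eq_norm, WithLp.toLp_smul, norm_smul, ← euclNorm_eq_norm, norm_inv,
      Real.norm_of_nonneg hz.le, inv_mul_cancel₀ hz.ne']
  have hσ : sigmaMin X ≤ euclNorm (((euclNorm z)⁻¹ • z) ᵥ* X) :=
    csInf_le ⟨0, by rintro _ ⟨u, -, rfl⟩; exact Real.sqrt_nonneg _⟩ ⟨_, hu, rfl⟩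
  rw [smul_vecMul, euclNorm_eq_norm, WithLp.toLp_smul, norm_smul, ← euclNorm_eq_norm, norm_inv,
    Real.norm_of_nonneg hz.le] at hσ
  rwa [← le_div_iff₀ hz, div_eq_inv_mul]

theorem sq_sigmaMin_mul_dotProduct_le {d k : ℕ} (X : Matrix (Fin d) (Fin k) ℝ)
    (z : Fin d → ℝ) : sigmaMin X ^ 2 * (z ⬝ᵥ z) ≤ (Xᵀ *ᵥ z) ⬝ᵥ (Xᵀ *ᵥ z) := by
  rw [← euclNorm_sq, ← euclNorm_sq, ← mul_pow, mulVec_transpose]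
  exact pow_le_pow_left₀ (mul_nonneg (sigmaMin_nonneg X) (Real.sqrt_nonneg _))
    (sigmaMin_mul_euclNorm_le X z) 2

theorem sigmaMin_pos {d k : ℕ} [NeZero d] (X : Matrix (Fin d) (Fin k) ℝ) (hX : X.rank = d) :
    0 < sigmaMin X := by
  have hinj : Function.Injective (toEuclideanLin Xᵀ) := by
    have := Xᵀ.mulVec_injective_of_rank_eq_card (by rw [rank_transpose, hX, Fintype.card_fin])
    exact (WithLp.toLp_injective 2).comp (this.comp (WithLp.ofLp_injective 2))
  obtain ⟨K, hK, hKf⟩ := (toEuclideanLin Xᵀ).injective_iff_antilipschitz.1 hinj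
  have hbound : ∀ u : Fin d → ℝ, euclNorm u = 1 → (K : ℝ)⁻¹ ≤ euclNorm (u ᵥ* X) := by
    intro u hu
    have := ZeroHomClass.bound_of_antilipschitz _ hKf (WithLp.toLp 2 u)
    rw [← euclNorm_eq_norm, hu] at this
    rw [euclNorm_eq_norm, ← mulVec_transpose, inv_le_iff_one_le_mul₀' (NNReal.coe_pos.2 hK)]
    exact this
  have hne : ({r | ∃ u : Fin d → ℝ, euclNorm u = 1 ∧ r = euclNorm (u ᵥ* X)} : Set ℝ).Nonempty :=
    ⟨_, Pi.single 0 1, by simp [euclNorm_eq_norm], rfl⟩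
  exact (inv_pos.2 (NNReal.coe_pos.2 hK)).trans_le
    (le_csInf hne (by rintro _ ⟨u, hu, rfl⟩; exact hbound u hu))

theorem sq_sigmaMin_mul_sub_mul_dotProduct_le {d k : ℕ} (X Y : Matrix (Fin d) (Fin k) ℝ)
    (hF : frobNorm (Xᵀ * X - Yᵀ * Y) ≤ sigmaMin X ^ 2) (z : Fin d → ℝ) :
    sigmaMin X ^ 2 * (sigmaMin X ^ 2 - frobNorm (Xᵀ * X - Yᵀ * Y)) * (z ⬝ᵥ z) ≤
      ((Y * Xᵀ) *ᵥ z) ⬝ᵥ ((Y * Xᵀ) *ᵥ z) := by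
  set w := Xᵀ *ᵥ z
  have hz : sigmaMin X ^ 2 * (z ⬝ᵥ z) ≤ w ⬝ᵥ w := sq_sigmaMin_mul_dotProduct_le X z
  have hw : sigmaMin X ^ 2 * (w ⬝ᵥ w) ≤ (X *ᵥ w) ⬝ᵥ (X *ᵥ w) := by
    have := Xᵀ.mul_dotProduct_le_of_forall_le (sq_sigmaMin_mul_dotProduct_le X) z
    rwa [transpose_transpose] at this
  have hgram : w ⬝ᵥ (Xᵀ * X - Yᵀ * Y) *ᵥ w = (X *ᵥ w) ⬝ᵥ (X *ᵥ w) - (Y *ᵥ w) ⬝ᵥ (Y *ᵥ w) := by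
    rw [sub_mulVec, dotProduct_sub, dotProduct_transpose_mul_self_mulVec,
      dotProduct_transpose_mul_self_mulVec]
  have hΔ := dotProduct_mulVec_le_frobNorm_mul (Xᵀ * X - Yᵀ * Y) w
  rw [← mulVec_mulVec]
  nlinarith [mul_le_mul_of_nonneg_left hz (sub_nonneg.2 hF)]

theorem two_mul_mul_frobNorm_sub_sq_le {k d : ℕ} (U V : Matrix (Fin k) (Fin d) ℝ) {c : ℝ}
    (hS : (Vᵀ * U).IsSymm) (hc : (Vᵀ * U - c • 1).PosSemidef) :
    2 * c * frobNorm (U - V) ^ 2 ≤ frobNorm (U * Uᵀ - V * Vᵀ) ^ 2 := by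
  have hsq : ∀ A : Matrix (Fin d) (Fin d) ℝ, Aᵀ = A → 0 ≤ trace (A * A) := fun A hA => by
    calc 0 ≤ frobNorm A ^ 2 := sq_nonneg _
      _ = trace (A * A) := by rw [frobNorm_sq, hA]
  have hΔ : (U * Uᵀ - V * Vᵀ)ᵀ = U * Uᵀ - V * Vᵀ := by
    rw [transpose_sub, transpose_mul, transpose_mul, transpose_transpose, transpose_transpose]
  have htr : c * trace ((U - V)ᵀ * (U - V)) ≤ trace (Vᵀ * U * ((U - V)ᵀ * (U - V))) := by
    have := (hc.mul_mul_conjTranspose_same (U - V)).trace_nonneg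
    rw [conjTranspose_eq_transpose_of_trivial, Matrix.mul_sub, Matrix.sub_mul, trace_sub,
      trace_mul_cycle, Matrix.mul_smul, Matrix.smul_mul, trace_smul, Matrix.mul_one,
      trace_mul_comm (U - V), smul_eq_mul] at this
    rw [trace_mul_comm (Vᵀ * U)]
    linarith
  rw [frobNorm_sq, frobNorm_sq, hΔ, trace_mul_self_sub_mul_transpose U V hS]
  have hU := hsq (Uᵀ * U - Vᵀ * U) (by rw [transpose_sub, hS.eq, transpose_mul, transpose_transpose])
  have hV := hsq (Vᵀ * V - Vᵀ * U) (by rw [transpose_sub, hS.eq, transpose_mul, transpose_transpose])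
  linarith

theorem rho_le_frobNorm {d k : ℕ} (X Y : Matrix (Fin d) (Fin k) ℝ) {Q : Matrix (Fin d) (Fin d) ℝ}
    (hQ : Qᵀ * Q = 1) : rho X Y ≤ frobNorm (X - Q * Y) :=
  csInf_le ⟨0, by rintro _ ⟨Q, -, rfl⟩; exact frobNorm_nonneg _⟩ ⟨Q, hQ, rfl⟩

theorem exists_orthogonal_sigmaMin_mul_frobNorm_sub_le {d k : ℕ} (X Y : Matrix (Fin d) (Fin k) ℝ)
    (hσ : 0 < sigmaMin X) (hF : frobNorm (Xᵀ * X - Yᵀ * Y) ≤ sigmaMin X ^ 2 / 2) :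
    ∃ Q : Matrix (Fin d) (Fin d) ℝ, Qᵀ * Q = 1 ∧
      sigmaMin X * frobNorm (X - Q * Y) ≤ frobNorm (Xᵀ * X - Yᵀ * Y) := by
  set σ := sigmaMin X
  set F := frobNorm (Xᵀ * X - Yᵀ * Y)
  have hb : 0 < σ ^ 2 * (σ ^ 2 - F) := by nlinarith [pow_pos hσ 2]
  obtain ⟨R, hR, hS, hc⟩ := (Y * Xᵀ).exists_polar_decomposition hb
    (sq_sigmaMin_mul_sub_mul_dotProduct_le X Y (by linarith [sq_nonneg σ]))
  have hRR : R * Rᵀ = 1 := mul_eq_one_comm.mp hR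
  have hVU : (Yᵀ * R)ᵀ * Xᵀ = Rᵀ * (Y * Xᵀ) := by
    rw [transpose_mul, transpose_transpose, Matrix.mul_assoc]
  have hgram : Xᵀ * Xᵀᵀ - Yᵀ * R * (Yᵀ * R)ᵀ = Xᵀ * X - Yᵀ * Y := by
    rw [transpose_transpose, transpose_mul, transpose_transpose, Matrix.mul_assoc,
      ← Matrix.mul_assoc R, hRR, Matrix.one_mul]
  have key := two_mul_mul_frobNorm_sub_sq_le Xᵀ (Yᵀ * R) (hVU ▸ hS) (hVU ▸ hc)
  rw [hgram, ← frobNorm_transpose, transpose_sub, transpose_transpose, transpose_mul,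
    transpose_transpose] at key
  have hσb : σ ^ 2 ≤ 2 * √(σ ^ 2 * (σ ^ 2 - F)) := by
    rw [← div_le_iff₀' two_pos]
    exact Real.le_sqrt_of_sq_le (by nlinarith [pow_pos hσ 2])
  refine ⟨Rᵀ, by rwa [transpose_transpose], ?_⟩
  have : (σ * frobNorm (X - Rᵀ * Y)) ^ 2 ≤ F ^ 2 := by
    rw [mul_pow]
    nlinarith [mul_le_mul_of_nonneg_right hσb (sq_nonneg (frobNorm (X - Rᵀ * Y)))]
  exact abs_le_of_sq_le_sq' this (frobNorm_nonneg _) |>.2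

theorem stmt6_general {d k : ℕ}
    (X Xt : Matrix (Fin d) (Fin k) ℝ)
    (hX : X.rank = d)
    (hclose : frobNorm (Xᵀ * X - Xtᵀ * Xt) ≤ sigmaMin X ^ 2 / 2) :
    rho X Xt ≤ Real.sqrt 2 * frobNorm (Xᵀ * X - Xtᵀ * Xt) / sigmaMin X := by
  rcases Nat.eq_zero_or_pos d with rfl | hd
  -- for `d = 0`, `sigmaMin X = sInf ∅ = 0`: the bound holds only because both sides vanish
  · calc rho X Xt ≤ frobNorm (X - 1 * Xt) := rho_le_frobNorm X Xt (by simp)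
      _ = 0 := by simp [frobNorm]
      _ ≤ _ := div_nonneg (mul_nonneg (Real.sqrt_nonneg 2) (frobNorm_nonneg _)) (sigmaMin_nonneg X)
  have : NeZero d := NeZero.of_pos hd
  have hσ := sigmaMin_pos X hX
  obtain ⟨Q, hQ, hXQ⟩ := exists_orthogonal_sigmaMin_mul_frobNorm_sub_le X Xt hσ hclose
  calc rho X Xt ≤ frobNorm (X - Q * Xt) := rho_le_frobNorm X Xt hQ
    _ ≤ frobNorm (Xᵀ * X - Xtᵀ * Xt) / sigmaMin X := by rwa [le_div_iff₀' hσ]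
    _ ≤ Real.sqrt 2 * frobNorm (Xᵀ * X - Xtᵀ * Xt) / sigmaMin X := by
      gcongr
      exact le_mul_of_one_le_left (frobNorm_nonneg _) Real.one_lt_sqrt_two.le

theorem stmt6 {d k : ℕ} (hdk : d ≤ k)
    (X Xt : Matrix (Fin d) (Fin k) ℝ)
    (hX : X.rank = d) (hXt : Xt.rank = d)
    (hclose : frobNorm (Xᵀ * X - Xtᵀ * Xt) ≤ sigmaMin X ^ 2 / 2) :
    rho X Xt ≤ Real.sqrt 2 * frobNorm (Xᵀ * X - Xtᵀ * Xt) / sigmaMin X :=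
  stmt6_general X Xt hX hclose
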